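/- If p : ℝ satisfies 0 < p ≤ 1 and m = ⌊π/(4·arcsin(√p))⌋, then sin²((2m+1)·arcsin(√p)) ≥ 1/2. (This is the Grover success-probability bound: measuring after m iterations yields a marked item with probability at least 1/2.) -/

import Mathlib

/-!
With `θ = arcsin √p ∈ (0, π/2]` and `m = ⌊π / (4θ)⌋` we have `4mθ ≤ π < 4(m+1)θ`, which puts
`(2m+1)θ` in `[π/4, 3π/4]`: there `cos (2(2m+1)θ) ≤ 0`, i.e. `sin² ((2m+1)θ) ≥ 1/2`.
-/

open Real Set

lemma half_le_sin_sq_of_mem_Icc {x : ℝ} (hx : x ∈ Icc (π / 4) (3 * π / 4)) :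
    1 / 2 ≤ sin x ^ 2 := by
  have hcos : cos (2 * x) ≤ 0 :=
    cos_nonpos_of_pi_div_two_le_of_le (by linarith [hx.1]) (by linarith [hx.2])
  rw [sin_sq_eq_half_sub]
  linarith

lemma two_mul_floor_add_one_mul_mem_Icc {θ : ℝ} (hθ : 0 < θ) (hθ' : θ ≤ 3 * π / 4) :
    (2 * (⌊π / (4 * θ)⌋ : ℝ) + 1) * θ ∈ Icc (π / 4) (3 * π / 4) := by
  set m := ⌊π / (4 * θ)⌋
  have hm : 0 ≤ m := Int.floor_nonneg.mpr (by positivity)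
  have hle : (m : ℝ) * (4 * θ) ≤ π := (le_div_iff₀ (by positivity)).mp (Int.floor_le _)
  have hlt : π < ((m : ℝ) + 1) * (4 * θ) :=
    (div_lt_iff₀ (by positivity)).mp (Int.lt_floor_add_one _)
  have hmθ : 0 ≤ (m : ℝ) * θ := mul_nonneg (by exact_mod_cast hm) hθ.le
  refine ⟨by linarith, ?_⟩
  rcases hm.eq_or_lt with hm0 | hm1
  · rw [← hm0]
    simpa using hθ'
  · -- for `m ≥ 1`, `(2m+1)θ ≤ 3mθ ≤ 3π/4`
    have hθm : θ ≤ (m : ℝ) * θ := le_mul_of_one_le_left hθ.le (by exact_mod_cast hm1)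
    linarith

theorem grover_success_probability_general (p : ℝ) (hp : 0 < p)
    (m : ℤ) (hm : m = ⌊Real.pi / (4 * Real.arcsin (Real.sqrt p))⌋) :
    (1 : ℝ) / 2 ≤
      Real.sin ((2 * (m : ℝ) + 1) * Real.arcsin (Real.sqrt p)) ^ 2 := by
  have hθ : 0 < arcsin √p := arcsin_pos.mpr (sqrt_pos.mpr hp)
  have hθ' : arcsin √p ≤ 3 * π / 4 := by linarith [arcsin_le_pi_div_two √p, pi_pos]
  subst hm
  exact half_le_sin_sq_of_mem_Icc (two_mul_floor_add_one_mul_mem_Icc hθ hθ')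

/-- Grover success-probability bound: if `0 < p ≤ 1` and
`m = ⌊π / (4 · arcsin √p)⌋`, then measuring after `m` Grover iterations
succeeds with probability `sin²((2m+1)·arcsin √p) ≥ 1/2`. -/
theorem grover_success_probability (p : ℝ) (hp : 0 < p) (hp1 : p ≤ 1)
    (m : ℤ) (hm : m = ⌊Real.pi / (4 * Real.arcsin (Real.sqrt p))⌋) :
    (1 : ℝ) / 2 ≤
      Real.sin ((2 * (m : ℝ) + 1) * Real.arcsin (Real.sqrt p)) ^ 2 :=
  grover_success_probability_general p hp m hm
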